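/- Any nice path decomposition of a graph G respecting a valid quintuple Q has width at least ppw(Q), the partial pathwidth of Q. -/
import Mathlib


open scoped Classical

noncomputable section

/-- Operations labelling the nodes of a nice tree decomposition.  For a `join`
we record the trace of the bag on the vertex cover together with the traces of
the lower sets of the two children. -/
inductive TDOp (V : Type) where
  | introduce (u : V)
  | forget (u : V)
  | join (X L1 L2 : Set V)

/-- `i` is an ancestor of `j` (inclusively) with respect to the parent function `parent`. -/
def ancestorOf {ι : Type} (parent : ι → ι) (i j : ι) : Prop :=
  ∃ n : ℕ, parent^[n] j = i

/-- `k` lies on the unique tree path between `i` and `j` in the rooted tree given by `parent`. -/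
def betweenNodes {ι : Type} (parent : ι → ι) (k i j : ι) : Prop :=
  (ancestorOf parent k i ∨ ancestorOf parent k j) ∧
    ∀ l, ancestorOf parent l i → ancestorOf parent l j → ancestorOf parent l k

/-- A rooted tree decomposition of a graph `G`, encoded via a parent function on the
node set `ι`:  every node reaches the root by iterating `parent`; the bags cover the
vertices and the edges, and the set of bags containing a fixed vertex is connected
(it is closed under taking nodes on tree paths). -/
structure RootedTreeDecomp (V ι : Type) (G : SimpleGraph V) where
  root : ι
  parent : ι → ι
  parent_root : parent root = root
  reaches_root : ∀ i, ancestorOf parent root i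
  bag : ι → Finset V
  bag_cover : ∀ v, ∃ i, v ∈ bag i
  bag_edge : ∀ u v, G.Adj u v → ∃ i, u ∈ bag i ∧ v ∈ bag i
  bag_conn : ∀ v i j k, v ∈ bag i → v ∈ bag j → betweenNodes parent k i j → v ∈ bag k

namespace RootedTreeDecomp

variable {V ι : Type} {G : SimpleGraph V} (t : RootedTreeDecomp V ι G)

/-- `i` is an ancestor of `j` (inclusively). -/
def anc (i j : ι) : Prop := ancestorOf t.parent i j

/-- `V_i` : the union of the bags of the subtree rooted at `i`. -/
def subVerts (i : ι) : Set V := {v | ∃ j, t.anc i j ∧ v ∈ t.bag j}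

/-- `L_i = V_i ∖ X_i`. -/
def Lset (i : ι) : Set V := t.subVerts i \ ↑(t.bag i)

/-- `R_i = V ∖ V_i`. -/
def Rset (i : ι) : Set V := Set.univ \ t.subVerts i

/-- The trace of node `i` on `C` is the three-partition `(L_i ∩ C, X_i ∩ C, R_i ∩ C)` of `C`. -/
def HasTrace (C : Set V) (i : ι) (LC XC RC : Set V) : Prop :=
  LC = t.Lset i ∩ C ∧ XC = (↑(t.bag i) : Set V) ∩ C ∧ RC = t.Rset i ∩ C

/-- The children of a node. -/
def children (i : ι) : Set ι := {j | j ≠ t.root ∧ t.parent j = i}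

/-- A leaf node: no children and a bag of size one. -/
def IsLeafNode (i : ι) : Prop := t.children i = ∅ ∧ ∃ u, t.bag i = {u}

/-- An introduce node. -/
def IsIntroduceNode [DecidableEq V] (i : ι) : Prop :=
  ∃ j u, t.children i = {j} ∧ u ∉ t.bag j ∧ t.bag i = insert u (t.bag j)

/-- A forget node. -/
def IsForgetNode [DecidableEq V] (i : ι) : Prop :=
  ∃ j u, t.children i = {j} ∧ u ∈ t.bag j ∧ t.bag i = (t.bag j).erase u

/-- A join node. -/
def IsJoinNode (i : ι) : Prop :=
  ∃ j k, j ≠ k ∧ t.children i = ({j, k} : Set ι) ∧ t.bag j = t.bag i ∧ t.bag k = t.bag i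

/-- A nice tree decomposition: every node is a leaf, introduce, forget or join node. -/
def IsNice [DecidableEq V] : Prop :=
  ∀ i, t.IsLeafNode i ∨ t.IsIntroduceNode i ∨ t.IsForgetNode i ∨ t.IsJoinNode i

/-- A nice path decomposition: every node is a leaf, introduce or forget node. -/
def IsNicePath [DecidableEq V] : Prop :=
  ∀ i, t.IsLeafNode i ∨ t.IsIntroduceNode i ∨ t.IsForgetNode i

/-- The operation `op` is the operation `τ_i` performed at node `i`
(join operations are recorded through their traces on the vertex cover `C`). -/
def HasOp [DecidableEq V] (C : Set V) (i : ι) : TDOp V → Prop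
  | TDOp.introduce u =>
      (t.children i = ∅ ∧ t.bag i = {u}) ∨
        ∃ j, t.children i = {j} ∧ u ∉ t.bag j ∧ t.bag i = insert u (t.bag j)
  | TDOp.forget u =>
      ∃ j, t.children i = {j} ∧ u ∈ t.bag j ∧ t.bag i = (t.bag j).erase u
  | TDOp.join X L1 L2 =>
      ∃ j k, j ≠ k ∧ t.children i = ({j, k} : Set ι) ∧ t.bag j = t.bag i ∧ t.bag k = t.bag i ∧
        X = (↑(t.bag i) : Set V) ∩ C ∧ L1 = t.Lset j ∩ C ∧ L2 = t.Lset k ∩ C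

/-- The width of a rooted tree decomposition: maximum bag size minus one. -/
def width [Fintype ι] : ℕ := (Finset.univ.sup fun i => (t.bag i).card) - 1

end RootedTreeDecomp

/-- A quintuple `(τ₋, L^C, X^C, R^C, τ₊)`. -/
structure TDQuint (V : Type) where
  tauL : TDOp V
  LC : Set V
  XC : Set V
  RC : Set V
  tauR : TDOp V

/-- `C` is a vertex cover of `G`. -/
def IsVertexCover {V : Type} (G : SimpleGraph V) (C : Set V) : Prop :=
  ∀ u v, G.Adj u v → u ∈ C ∨ v ∈ C

/-- `X` separates `A` from `B` in the subgraph of `G` induced by `D`: there is no walk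
between a vertex of `A` and a vertex of `B` all of whose vertices avoid `X` and stay in `D`. -/
def SeparatesIn {V : Type} (G : SimpleGraph V) (D X A B : Set V) : Prop :=
  ∀ a ∈ A, ∀ b ∈ B, ¬ ∃ p : G.Walk a b, ∀ v ∈ p.support, v ∈ D \ X

/-- `(LC, XC, RC)` is a valid partition of `C`: it is the trace on `C` of some node of some
rooted tree decomposition of `G`. -/
def ValidPartition {V : Type} (G : SimpleGraph V) (C LC XC RC : Set V) : Prop :=
  ∃ (ι : Type) (t : RootedTreeDecomp V ι G) (i : ι), t.HasTrace C i LC XC RC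

section

variable {V ι : Type} [DecidableEq V] {G : SimpleGraph V}

/-- The decomposition `t` respects the (non-degenerate) quintuple `Q`, with `imin` and `imax`
as lowest and highest nodes of the subpath of nodes whose trace on `C` is `(LC, XC, RC)`:
the operation at `imin` is `τ₋`, and the operation at the father of `imax` is `τ₊`
(taken to be `forget w` on the root bag `{w}` when `imax` is the root). -/
def RespectsAtND (t : RootedTreeDecomp V ι G) (C : Set V) (Q : TDQuint V)
    (imin imax : ι) : Prop :=
  t.HasTrace C imin Q.LC Q.XC Q.RC ∧ t.HasTrace C imax Q.LC Q.XC Q.RC ∧ t.anc imax imin ∧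
    (∀ i, t.HasTrace C i Q.LC Q.XC Q.RC → t.anc i imin ∧ t.anc imax i) ∧
    t.HasOp C imin Q.tauL ∧
    ((imax = t.root ∧ ∃ w, t.bag t.root = {w} ∧ Q.tauR = TDOp.forget w) ∨
      (imax ≠ t.root ∧ t.HasOp C (t.parent imax) Q.tauR))

/-- The decomposition `t` respects the degenerate quintuple `Q` at node `i`: node `i` has
trace `(∅, XC, RC)` on `C` and its father performs the forget operation `τ₊`. -/
def RespectsAtDeg (t : RootedTreeDecomp V ι G) (C : Set V) (Q : TDQuint V) (i : ι) : Prop :=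
  t.HasTrace C i Q.LC Q.XC Q.RC ∧
    ∃ u, Q.tauR = TDOp.forget u ∧ i ≠ t.root ∧ t.HasOp C (t.parent i) (TDOp.forget u)

/-- The decomposition `t` respects the quintuple `Q`, witnessed by the nodes `imin`, `imax`. -/
def RespectsAt (t : RootedTreeDecomp V ι G) (C : Set V) (Q : TDQuint V)
    (imin imax : ι) : Prop :=
  (Q.LC ≠ ∅ ∧ RespectsAtND t C Q imin imax) ∨
    (Q.LC = ∅ ∧ imin = imax ∧ RespectsAtDeg t C Q imax)

/-- The decomposition `t` respects the quintuple `Q`. -/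
def Respects (t : RootedTreeDecomp V ι G) (C : Set V) (Q : TDQuint V) : Prop :=
  ∃ imin imax, RespectsAt t C Q imin imax

end

/-- Valid quintuples (tree-decomposition version), including the degenerate ones. -/
def ValidQuintT {V : Type} [DecidableEq V] (G : SimpleGraph V) (C : Set V)
    (Q : TDQuint V) : Prop :=
  (Q.LC ≠ ∅ ∧ ∃ (ι : Type) (t : RootedTreeDecomp V ι G), t.IsNice ∧ Respects t C Q) ∨
    (Q.LC = ∅ ∧ ValidPartition G C ∅ Q.XC Q.RC ∧
      ∃ u, u ∈ Q.XC ∧ G.neighborSet u ⊆ Q.XC ∧ Q.tauR = TDOp.forget u)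

/-- Valid quintuples (path-decomposition version): `Q` is respected by some nice path
decomposition of `G`. -/
def ValidQuintP {V : Type} [DecidableEq V] (G : SimpleGraph V) (C : Set V)
    (Q : TDQuint V) : Prop :=
  ∃ (ι : Type) (t : RootedTreeDecomp V ι G), t.IsNicePath ∧
    ∃ imin imax, RespectsAtND t C Q imin imax

section

variable {V : Type} [DecidableEq V]

/-- `XTR^S(Q)`: vertices of `S = V ∖ C` having neighbours in both `L^C` and `R^C`. -/
def XTRset (G : SimpleGraph V) (C : Set V) (Q : TDQuint V) : Set V :=
  {x | x ∉ C ∧ (G.neighborSet x ∩ Q.LC).Nonempty ∧ (G.neighborSet x ∩ Q.RC).Nonempty}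

/-- `XL^S(Q)`. -/
def XLset (G : SimpleGraph V) (C : Set V) (Q : TDQuint V) : Set V :=
  match Q.tauL with
  | TDOp.introduce u =>
      {x | x ∉ C ∧ G.neighborSet x ⊆ Q.LC ∪ Q.XC ∧ u ∈ G.neighborSet x ∧
        (G.neighborSet x ∩ Q.LC).Nonempty}
  | TDOp.forget _ => ∅
  | TDOp.join _ L1 L2 =>
      {x | x ∉ C ∧ (G.neighborSet x ∩ L1).Nonempty ∧ (G.neighborSet x ∩ L2).Nonempty ∧
        G.neighborSet x ∩ Q.RC = ∅}

/-- `XR^S(Q)`. -/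
def XRset (G : SimpleGraph V) (C : Set V) (Q : TDQuint V) : Set V :=
  match Q.tauR with
  | TDOp.forget v =>
      {x | x ∉ C ∧ G.neighborSet x ⊆ Q.RC ∪ Q.XC ∧ v ∈ G.neighborSet x ∧
        (G.neighborSet x ∩ Q.RC).Nonempty}
  | _ => ∅

/-- `ε(Q)` (treewidth version): `1` if some vertex of `S` has neighbourhood exactly `X^C`. -/
def epsT (G : SimpleGraph V) (C : Set V) (Q : TDQuint V) : ℕ :=
  if ∃ x, x ∉ C ∧ G.neighborSet x = Q.XC then 1 else 0

/-- The local treewidth of a quintuple. -/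
def loctw (G : SimpleGraph V) (C : Set V) (Q : TDQuint V) : ℕ :=
  Q.XC.ncard +
    max (max ((XTRset G C Q).ncard + (XLset G C Q).ncard)
      ((XTRset G C Q).ncard + (XRset G C Q).ncard)) (epsT G C Q) - 1

/-- Fuelled version of the partial treewidth recursion. -/
def ptwAux (G : SimpleGraph V) (C : Set V) : ℕ → TDQuint V → ℕ
  | 0, Q => loctw G C Q
  | m + 1, Q =>
    if Q.LC = ∅ then loctw G C Q
    else
      match Q.tauL with
      | TDOp.introduce u =>
          max (loctw G C Q)
            (sInf {n | ∃ τ,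
              ValidQuintT G C ⟨τ, Q.LC, Q.XC \ {u}, Q.RC ∪ {u}, TDOp.introduce u⟩ ∧
              n = ptwAux G C m ⟨τ, Q.LC, Q.XC \ {u}, Q.RC ∪ {u}, TDOp.introduce u⟩})
      | TDOp.forget u =>
          max (loctw G C Q)
            (sInf {n | ∃ τ,
              ValidQuintT G C ⟨τ, Q.LC \ {u}, Q.XC ∪ {u}, Q.RC, TDOp.forget u⟩ ∧
              n = ptwAux G C m ⟨τ, Q.LC \ {u}, Q.XC ∪ {u}, Q.RC, TDOp.forget u⟩})
      | TDOp.join _ L1 L2 =>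
          max (loctw G C Q)
            (max
              (sInf {n | ∃ τ,
                ValidQuintT G C ⟨τ, L1, Q.XC, Q.RC ∪ L2, TDOp.join Q.XC L1 L2⟩ ∧
                n = ptwAux G C m ⟨τ, L1, Q.XC, Q.RC ∪ L2, TDOp.join Q.XC L1 L2⟩})
              (sInf {n | ∃ τ,
                ValidQuintT G C ⟨τ, L2, Q.XC, Q.RC ∪ L1, TDOp.join Q.XC L1 L2⟩ ∧
                n = ptwAux G C m ⟨τ, L2, Q.XC, Q.RC ∪ L1, TDOp.join Q.XC L1 L2⟩}))

/-- The partial treewidth `ptw(Q)` of a quintuple (defined with sufficient fuel: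
each recursive step strictly decreases `2·|L^C| + |X^C|`). -/
def ptw (G : SimpleGraph V) (C : Set V) (Q : TDQuint V) : ℕ :=
  ptwAux G C (2 * Q.LC.ncard + Q.XC.ncard) Q

/-- `X^C_-` : the bag trace just below `imin`. -/
def XCminus (Q : TDQuint V) : Set V :=
  match Q.tauL with
  | TDOp.introduce u => Q.XC \ {u}
  | TDOp.forget u => Q.XC ∪ {u}
  | TDOp.join _ _ _ => Q.XC

/-- `X^C_+` : the bag trace just above `imax`. -/
def XCplus (Q : TDQuint V) : Set V :=
  match Q.tauR with
  | TDOp.introduce v => Q.XC ∪ {v}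
  | TDOp.forget v => Q.XC \ {v}
  | TDOp.join _ _ _ => Q.XC

/-- `XF^S(Q)` (pathwidth version). -/
def XFPset (G : SimpleGraph V) (C : Set V) (Q : TDQuint V) : Set V :=
  {x | x ∉ C ∧ G.neighborSet x ⊆ Q.XC ∧
    (XCminus Q ⊂ Q.XC → ¬ G.neighborSet x ⊆ XCminus Q) ∧
    (XCplus Q ⊂ Q.XC → ¬ G.neighborSet x ⊆ XCplus Q)}

/-- `ε(Q)` (pathwidth version). -/
def epsP (G : SimpleGraph V) (C : Set V) (Q : TDQuint V) : ℕ :=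
  if (XFPset G C Q).Nonempty then 1 else 0

/-- The local pathwidth of a quintuple. -/
def locpw (G : SimpleGraph V) (C : Set V) (Q : TDQuint V) : ℕ :=
  Q.XC.ncard + (XTRset G C Q).ncard +
    max (max (XLset G C Q).ncard (XRset G C Q).ncard) (epsP G C Q) - 1

/-- Fuelled version of the partial pathwidth recursion. -/
def ppwAux (G : SimpleGraph V) (C : Set V) : ℕ → TDQuint V → ℕ
  | 0, Q => locpw G C Q
  | m + 1, Q =>
    if ∃ u, Q.tauL = TDOp.introduce u ∧ Q.LC = ∅ ∧ Q.XC = {u} ∧ Q.RC = C \ {u} then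
      locpw G C Q
    else
      match Q.tauL with
      | TDOp.introduce u =>
          max (locpw G C Q)
            (sInf {n | ∃ τ,
              ValidQuintP G C ⟨τ, Q.LC, Q.XC \ {u}, Q.RC ∪ {u}, TDOp.introduce u⟩ ∧
              n = ppwAux G C m ⟨τ, Q.LC, Q.XC \ {u}, Q.RC ∪ {u}, TDOp.introduce u⟩})
      | TDOp.forget u =>
          max (locpw G C Q)
            (sInf {n | ∃ τ,
              ValidQuintP G C ⟨τ, Q.LC \ {u}, Q.XC ∪ {u}, Q.RC, TDOp.forget u⟩ ∧
              n = ppwAux G C m ⟨τ, Q.LC \ {u}, Q.XC ∪ {u}, Q.RC, TDOp.forget u⟩})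
      | TDOp.join _ _ _ => locpw G C Q

/-- The partial pathwidth `ppw(Q)` of a quintuple. -/
def ppw (G : SimpleGraph V) (C : Set V) (Q : TDQuint V) : ℕ :=
  ppwAux G C (2 * Q.LC.ncard + Q.XC.ncard) Q

end

end

section AuxInfra

namespace RootedTreeDecomp

variable {V ι : Type} {G : SimpleGraph V} (t : RootedTreeDecomp V ι G)

lemma anc_refl (i : ι) : t.anc i i := ⟨0, rfl⟩

lemma anc_parent (j : ι) : t.anc (t.parent j) j := ⟨1, rfl⟩

variable {t}

lemma anc_trans {i j k : ι} (h1 : t.anc i j) (h2 : t.anc j k) : t.anc i k := by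
  obtain ⟨n, hn⟩ := h1; obtain ⟨m, hm⟩ := h2
  exact ⟨n + m, by rw [Function.iterate_add_apply, hm, hn]⟩

lemma iterate_root (n : ℕ) : t.parent^[n] t.root = t.root :=
  Function.iterate_fixed t.parent_root n

lemma anc_root (i : ι) : t.anc t.root i := t.reaches_root i

lemma eq_root_of_anc_root {i : ι} (h : t.anc i t.root) : i = t.root := by
  obtain ⟨n, hn⟩ := h; rw [iterate_root] at hn; exact hn.symm

lemma eq_root_of_parent_eq {i : ι} (h : t.parent i = i) : i = t.root := by
  obtain ⟨n, hn⟩ := t.reaches_root i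
  rwa [Function.iterate_fixed h n] at hn

lemma anc_antisymm {i j : ι} (h1 : t.anc i j) (h2 : t.anc j i) : i = j := by
  obtain ⟨n, hn⟩ := h1; obtain ⟨m, hm⟩ := h2
  rcases Nat.eq_zero_or_pos (m + n) with h0 | hpos
  · obtain ⟨hm0, hn0⟩ := Nat.add_eq_zero.mp h0
    subst hm0; subst hn0; rw [← hn, ← hm]; rfl
  · -- cycle: parent^[m+n] j = j
    have hcyc : t.parent^[m + n] j = j := by
      rw [Function.iterate_add_apply, hn, hm]
    have hcyck : ∀ k : ℕ, t.parent^[k * (m + n)] j = j := by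
      intro k; induction k with
      | zero => simp
      | succ k ih => rw [Nat.succ_mul, Function.iterate_add_apply, hcyc, ih]
    obtain ⟨d, hd⟩ := t.reaches_root j
    have hjroot : j = t.root := by
      have h1' : t.parent^[d * (m + n)] j = j := hcyck d
      have hle : d ≤ d * (m + n) := Nat.le_mul_of_pos_right d hpos
      calc j = t.parent^[d * (m + n)] j := (hcyck d).symm
        _ = t.parent^[d * (m + n) - d] (t.parent^[d] j) := by
            rw [← Function.iterate_add_apply]; congr 1; omega
        _ = t.root := by rw [hd, iterate_root]
    subst hjroot
    rw [iterate_root] at hn; exact hn.symm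

end RootedTreeDecomp

end AuxInfra

namespace RootedTreeDecomp

variable {V ι : Type} {G : SimpleGraph V} {t : RootedTreeDecomp V ι G}

open scoped Classical in
/-- Depth of a node: minimal number of parent steps to reach the root. -/
noncomputable def tdepth (t : RootedTreeDecomp V ι G) (i : ι) : ℕ :=
  Nat.find (t.reaches_root i)

lemma tdepth_spec (i : ι) : t.parent^[t.tdepth i] i = t.root := by
  classical exact Nat.find_spec (t.reaches_root i)

lemma tdepth_min {i : ι} {n : ℕ} (h : t.parent^[n] i = t.root) : t.tdepth i ≤ n := by
  classical exact Nat.find_min' (t.reaches_root i) h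

lemma tdepth_root : t.tdepth t.root = 0 :=
  Nat.le_zero.mp (tdepth_min (by rfl))

lemma tdepth_eq_zero {i : ι} (h : t.tdepth i = 0) : i = t.root := by
  have := tdepth_spec (t := t) i; rwa [h] at this

lemma tdepth_parent_lt {j : ι} (h : j ≠ t.root) : t.tdepth (t.parent j) < t.tdepth j := by
  have hd : t.parent^[t.tdepth j] j = t.root := tdepth_spec j
  have hpos : 0 < t.tdepth j := by
    rcases Nat.eq_zero_or_pos (t.tdepth j) with h0 | h0
    · exact absurd (tdepth_eq_zero h0) h
    · exact h0
  have : t.parent^[t.tdepth j - 1] (t.parent j) = t.root := by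
    have : t.parent^[(t.tdepth j - 1) + 1] j = t.root := by
      rwa [Nat.sub_add_cancel hpos]
    rwa [Function.iterate_succ_apply] at this
  have := tdepth_min this
  omega

lemma tdepth_le_of_anc {i j : ι} (h : t.anc i j) : t.tdepth i ≤ t.tdepth j := by
  obtain ⟨m, hm⟩ := h
  have hd : t.parent^[t.tdepth j] j = t.root := tdepth_spec j
  rcases le_or_gt m (t.tdepth j) with hle | hlt
  · have : t.parent^[t.tdepth j - m] i = t.root := by
      rw [← hm, ← Function.iterate_add_apply]
      rw [show t.tdepth j - m + m = t.tdepth j by omega]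
      exact hd
    exact le_trans (tdepth_min this) (by omega)
  · have : i = t.root := by
      rw [← hm, show m = (m - t.tdepth j) + t.tdepth j by omega,
        Function.iterate_add_apply, hd, iterate_root]
    rw [this, tdepth_root]; exact Nat.zero_le _

lemma tdepth_lt_of_anc {i j : ι} (h : t.anc i j) (hne : i ≠ j) :
    t.tdepth i < t.tdepth j := by
  obtain ⟨m, hm⟩ := h
  have hmpos : 0 < m := by
    rcases Nat.eq_zero_or_pos m with h0 | h0
    · subst h0; exact absurd hm.symm hne
    · exact h0
  have h1 : t.anc i (t.parent j) := by
    refine ⟨m - 1, ?_⟩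
    have : t.parent^[(m - 1) + 1] j = i := by rwa [Nat.sub_add_cancel hmpos]
    rwa [Function.iterate_succ_apply] at this
  have hjr : j ≠ t.root := by
    intro hr; subst hr
    exact hne (by rw [← hm, iterate_root])
  exact lt_of_le_of_lt (tdepth_le_of_anc h1) (tdepth_parent_lt hjr)

lemma mem_children_iff {i j : ι} : j ∈ t.children i ↔ j ≠ t.root ∧ t.parent j = i :=
  Iff.rfl

lemma children_singleton_parent {i j : ι} (h : t.children i = {j}) :
    t.parent j = i ∧ j ≠ t.root := by
  have : j ∈ t.children i := by rw [h]; exact Set.mem_singleton j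
  exact ⟨this.2, this.1⟩

section NicePath
variable [DecidableEq V] (ht : t.IsNicePath)
include ht

lemma child_unique {i a b : ι} (ha : a ∈ t.children i) (hb : b ∈ t.children i) : a = b := by
  rcases ht i with h | h | h
  · rw [h.1] at ha; exact absurd ha (Set.notMem_empty a)
  · obtain ⟨j, u, hc, _⟩ := h; rw [hc] at ha hb
    rw [Set.mem_singleton_iff] at ha hb; rw [ha, hb]
  · obtain ⟨j, u, hc, _⟩ := h; rw [hc] at ha hb
    rw [Set.mem_singleton_iff] at ha hb; rw [ha, hb]

/-- In a nice path decomposition the nodes form a chain. -/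
lemma anc_total (i j : ι) : t.anc i j ∨ t.anc j i := by
  classical
  generalize hd : t.tdepth j = n
  induction n using Nat.strong_induction_on generalizing j i with
  | _ n IH =>
    by_cases hjr : j = t.root
    · subst hjr; exact Or.inr (anc_root i)
    · have hdp : t.tdepth (t.parent j) < n := hd ▸ tdepth_parent_lt hjr
      rcases IH _ hdp i (t.parent j) rfl with hL | hR
      · obtain ⟨m, hm⟩ := hL
        exact Or.inl ⟨m + 1, by rwa [Function.iterate_succ_apply]⟩
      · -- parent j is an ancestor of i
        have hex : ∃ m, t.parent^[m] i = t.parent j := hR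
        set m := Nat.find hex with hmdef
        have hms : t.parent^[m] i = t.parent j := Nat.find_spec hex
        rcases Nat.eq_zero_or_pos m with h0 | h0
        · rw [h0] at hms
          exact Or.inl ⟨1, by rw [Function.iterate_one, ← hms]; rfl⟩
        · set c := t.parent^[m - 1] i with hc
          have hpc : t.parent c = t.parent j := by
            rw [hc]
            have : t.parent (t.parent^[m-1] i) = t.parent^[(m-1)+1] i :=
              (Function.iterate_succ_apply' t.parent (m-1) i).symm
            rw [this, Nat.sub_add_cancel h0]
            exact hms
          have hcne : c ≠ t.parent j := by
            intro he
            have := Nat.find_min hex (m := m - 1) (by omega)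
            exact this (by rw [← hc]; exact he)
          have hcroot : c ≠ t.root := by
            intro he
            apply hcne
            rw [he, ← t.parent_root, ← he, hpc]
          have hcj : c = j := child_unique ht
            (mem_children_iff.mpr ⟨hcroot, hpc⟩)
            (mem_children_iff.mpr ⟨hjr, rfl⟩)
          exact Or.inr ⟨m - 1, by rw [← hc, hcj]⟩

end NicePath

end RootedTreeDecomp

namespace RootedTreeDecomp

variable {V ι : Type} {G : SimpleGraph V} {t : RootedTreeDecomp V ι G}

lemma bag_subset_subVerts (i : ι) : ↑(t.bag i) ⊆ t.subVerts i :=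
  fun v hv => ⟨i, t.anc_refl i, hv⟩

lemma subVerts_mono {i j : ι} (h : t.anc i j) : t.subVerts j ⊆ t.subVerts i :=
  fun v ⟨k, hk, hv⟩ => ⟨k, anc_trans h hk, hv⟩

lemma Rset_mono {i j : ι} (h : t.anc i j) : t.Rset i ⊆ t.Rset j :=
  fun v ⟨hu, hv⟩ => ⟨hu, fun hs => hv (subVerts_mono h hs)⟩

/-- Connectivity along the ancestor chain. -/
lemma mem_bag_of_between {x : V} {k1 k2 m : ι} (h1 : x ∈ t.bag k1) (h2 : x ∈ t.bag k2)
    (ha : t.anc k1 m) (hb : t.anc m k2) : x ∈ t.bag m :=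
  t.bag_conn x k2 k1 m h2 h1 ⟨Or.inl hb, fun _ _ hl1 => anc_trans hl1 ha⟩

lemma Lset_subset_parent (j : ι) : t.Lset j ⊆ t.Lset (t.parent j) := by
  rintro v ⟨hsv, hnb⟩
  obtain ⟨k, hk, hvk⟩ := hsv
  refine ⟨subVerts_mono (t.anc_parent j) ⟨k, hk, hvk⟩, fun hvb => hnb ?_⟩
  exact mem_bag_of_between hvb hvk (t.anc_parent j) hk

lemma Lset_mono {i j : ι} (h : t.anc i j) : t.Lset j ⊆ t.Lset i := by
  obtain ⟨n, hn⟩ := h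
  subst hn
  induction n generalizing j with
  | zero => exact fun v hv => hv
  | succ n IH =>
    rw [Function.iterate_succ_apply]
    exact fun v hv => IH (Lset_subset_parent j hv)

lemma mem_bag_iff_not {m : ι} {v : V} :
    v ∈ (↑(t.bag m) : Set V) ↔ v ∉ t.Lset m ∧ v ∉ t.Rset m := by
  constructor
  · intro hv
    exact ⟨fun hL => hL.2 hv, fun hR => hR.2 (bag_subset_subVerts m hv)⟩
  · rintro ⟨hL, hR⟩
    have hsv : v ∈ t.subVerts m := by
      by_contra hns; exact hR ⟨Set.mem_univ v, hns⟩
    by_contra hb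
    exact hL ⟨hsv, hb⟩

lemma Lset_disj_bag (m : ι) : t.Lset m ∩ ↑(t.bag m) = ∅ := by
  ext v; simp only [Set.mem_inter_iff, Set.mem_empty_iff_false, iff_false]
  rintro ⟨hL, hB⟩; exact (mem_bag_iff_not.mp hB).1 hL

lemma Rset_disj_bag (m : ι) : t.Rset m ∩ ↑(t.bag m) = ∅ := by
  ext v; simp only [Set.mem_inter_iff, Set.mem_empty_iff_false, iff_false]
  rintro ⟨hR, hB⟩; exact (mem_bag_iff_not.mp hB).2 hR

lemma Lset_disj_Rset (m : ι) : t.Lset m ∩ t.Rset m = ∅ := by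
  ext v; simp only [Set.mem_inter_iff, Set.mem_empty_iff_false, iff_false]
  rintro ⟨hL, hR⟩; exact hR.2 hL.1

section NicePath
variable [DecidableEq V] (ht : t.IsNicePath)
include ht

/-- All bags containing a vertex of `Lset m` are strict descendants of `m`. -/
lemma Lset_bags_below {v : V} {m k : ι} (hv : v ∈ t.Lset m) (hk : v ∈ t.bag k) :
    t.anc m k ∧ k ≠ m := by
  obtain ⟨⟨k0, hk0, hvk0⟩, hnb⟩ := hv
  have hne : k ≠ m := fun he => hnb (he ▸ hk)
  rcases anc_total ht k m with h | h
  · exact absurd (mem_bag_of_between hk hvk0 h hk0) hnb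
  · exact ⟨h, hne⟩

/-- All bags containing a vertex of `Rset m` are strict ancestors of `m`. -/
lemma Rset_bags_above {v : V} {m k : ι} (hv : v ∈ t.Rset m) (hk : v ∈ t.bag k) :
    t.anc k m ∧ k ≠ m := by
  have hnot : ¬ t.anc m k := fun h => hv.2 ⟨k, h, hk⟩
  rcases anc_total ht k m with h | h
  · exact ⟨h, fun he => hnot (he ▸ t.anc_refl m)⟩
  · exact absurd h hnot

end NicePath

/-- Strict descendants of a node with a unique child are descendants of the child. -/
lemma anc_child {i j k : ι} (hj : t.children i = {j}) (hk : t.anc i k) (hki : k ≠ i) :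
    t.anc j k := by
  classical
  have hex : ∃ n, t.parent^[n] k = i := hk
  set n := Nat.find hex with hndef
  have hns : t.parent^[n] k = i := Nat.find_spec hex
  have hnpos : 0 < n := by
    rcases Nat.eq_zero_or_pos n with h0 | h0
    · rw [h0] at hns; exact absurd hns hki
    · exact h0
  set c := t.parent^[n - 1] k with hc
  have hpc : t.parent c = i := by
    rw [hc]
    have : t.parent (t.parent^[n-1] k) = t.parent^[(n-1)+1] k :=
      (Function.iterate_succ_apply' t.parent (n-1) k).symm
    rw [this, Nat.sub_add_cancel hnpos]; exact hns
  have hcroot : c ≠ t.root := by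
    intro he
    have : t.parent^[n-1] k = i := by rw [← hc, he, ← t.parent_root, ← he, hpc]
    exact Nat.find_min hex (m := n - 1) (by omega) this
  have : c ∈ t.children i := mem_children_iff.mpr ⟨hcroot, hpc⟩
  rw [hj, Set.mem_singleton_iff] at this
  exact ⟨n - 1, by rw [← hc, this]⟩

/-- Descendants of a leaf node. -/
lemma desc_of_leaf {i k : ι} (hc : t.children i = ∅) (hk : t.anc i k) : k = i := by
  classical
  have hex : ∃ n, t.parent^[n] k = i := hk
  set n := Nat.find hex with hndef
  have hns : t.parent^[n] k = i := Nat.find_spec hex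
  rcases Nat.eq_zero_or_pos n with h0 | h0
  · rw [h0] at hns; exact hns
  · exfalso
    set c := t.parent^[n - 1] k with hcdef
    have hpc : t.parent c = i := by
      rw [hcdef]
      have : t.parent (t.parent^[n-1] k) = t.parent^[(n-1)+1] k :=
        (Function.iterate_succ_apply' t.parent (n-1) k).symm
      rw [this, Nat.sub_add_cancel h0]; exact hns
    have hcroot : c ≠ t.root := by
      intro he
      have : t.parent^[n-1] k = i := by rw [← hcdef, he, ← t.parent_root, ← he, hpc]
      exact Nat.find_min hex (m := n - 1) (by omega) this
    have : c ∈ t.children i := mem_children_iff.mpr ⟨hcroot, hpc⟩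
    rw [hc] at this
    exact Set.notMem_empty c this

/-- The subtree vertices of a leaf node are exactly its bag. -/
lemma leaf_subVerts {i : ι} (hc : t.children i = ∅) : t.subVerts i = ↑(t.bag i) := by
  apply Set.Subset.antisymm
  · rintro v ⟨k, hk, hvk⟩
    rwa [desc_of_leaf hc hk] at hvk
  · exact bag_subset_subVerts i

lemma leaf_Lset {i : ι} (hc : t.children i = ∅) : t.Lset i = ∅ := by
  rw [RootedTreeDecomp.Lset, leaf_subVerts hc, Set.diff_self]

/-- subtree vertices of a node with unique child. -/
lemma subVerts_child {i j : ι} (hj : t.children i = {j}) :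
    t.subVerts i = ↑(t.bag i) ∪ t.subVerts j := by
  apply Set.Subset.antisymm
  · rintro v ⟨k, hk, hvk⟩
    by_cases hki : k = i
    · exact Or.inl (hki ▸ hvk)
    · exact Or.inr ⟨k, anc_child hj hk hki, hvk⟩
  · rintro v (hv | hv)
    · exact bag_subset_subVerts i hv
    · exact subVerts_mono ⟨1, by rw [Function.iterate_one, (children_singleton_parent hj).1]⟩ hv

end RootedTreeDecomp

namespace RootedTreeDecomp

variable {V ι : Type} {G : SimpleGraph V} {t : RootedTreeDecomp V ι G}

lemma subVerts_root : t.subVerts t.root = Set.univ := by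
  apply Set.eq_univ_of_forall
  intro v
  obtain ⟨i, hi⟩ := t.bag_cover v
  exact ⟨i, anc_root i, hi⟩

lemma Rset_root : t.Rset t.root = ∅ := by
  rw [RootedTreeDecomp.Rset, subVerts_root, Set.diff_self]

lemma anc_of_child {p j : ι} (hj : t.children p = {j}) : t.anc p j :=
  ⟨1, by rw [Function.iterate_one, (children_singleton_parent hj).1]⟩

section DecEq
variable [DecidableEq V]

/-- Facts about a forget step: `p` has unique child `j`, forgets `u`. -/
lemma forget_step {p j : ι} {u : V} (hj : t.children p = {j}) (hu : u ∈ t.bag j)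
    (hb : t.bag p = (t.bag j).erase u) :
    (↑(t.bag j) : Set V) = insert u ↑(t.bag p) ∧ t.subVerts j = t.subVerts p ∧
      t.Lset j = t.Lset p \ {u} ∧ t.Rset j = t.Rset p ∧ u ∈ t.Lset p := by
  have hbj : (t.bag j : Set V) = insert u ↑(t.bag p) := by
    rw [hb]; ext x
    simp only [Finset.coe_erase, Set.mem_insert_iff, Set.mem_diff, Set.mem_singleton_iff,
      Finset.mem_coe]
    constructor
    · intro hx
      by_cases hxu : x = u
      · exact Or.inl hxu
      · exact Or.inr ⟨hx, hxu⟩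
    · rintro (rfl | ⟨hx, _⟩)
      · exact hu
      · exact hx
  have hsv : t.subVerts j = t.subVerts p := by
    apply Set.Subset.antisymm (subVerts_mono (anc_of_child hj))
    rw [subVerts_child hj]
    apply Set.union_subset _ (fun v hv => hv)
    intro v hv
    rw [hb] at hv
    exact bag_subset_subVerts j (Finset.erase_subset u (t.bag j) hv)
  have hunb : u ∉ (t.bag p : Set V) := by
    rw [hb]; simp
  refine ⟨hbj, hsv, ?_, ?_, ?_⟩
  · rw [RootedTreeDecomp.Lset, RootedTreeDecomp.Lset, hsv, hbj]
    ext x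
    simp only [Set.mem_diff, Set.mem_insert_iff, Set.mem_singleton_iff, Finset.mem_coe,
      Set.mem_setOf_eq]
    tauto
  · rw [RootedTreeDecomp.Rset, RootedTreeDecomp.Rset, hsv]
  · exact ⟨hsv ▸ bag_subset_subVerts j hu, hunb⟩

/-- Facts about an introduce step: `p` has unique child `j`, introduces `u`. -/
lemma introduce_step {p j : ι} {u : V} (hj : t.children p = {j}) (hu : u ∉ t.bag j)
    (hb : t.bag p = insert u (t.bag j)) :
    u ∉ t.subVerts j ∧ t.subVerts p = insert u (t.subVerts j) ∧
      t.Lset j = t.Lset p ∧ t.Rset j = insert u (t.Rset p) ∧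
      (↑(t.bag j) : Set V) = ↑(t.bag p) \ {u} := by
  have hup : u ∈ (t.bag p : Set V) := by rw [hb]; simp
  have husv : u ∉ t.subVerts j := by
    rintro ⟨k, hk, hvk⟩
    exact hu (mem_bag_of_between hup hvk (anc_of_child hj) hk)
  have hsv : t.subVerts p = insert u (t.subVerts j) := by
    rw [subVerts_child hj, hb]
    ext x
    simp only [Set.mem_union, Set.mem_insert_iff, Finset.coe_insert, Finset.mem_coe]
    constructor
    · rintro (h | h)
      · rcases h with h | h
        · exact Or.inl h
        · exact Or.inr (bag_subset_subVerts j h)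
      · exact Or.inr h
    · rintro (h | h)
      · exact Or.inl (Or.inl h)
      · exact Or.inr h
  have hbj : (↑(t.bag j) : Set V) = ↑(t.bag p) \ {u} := by
    rw [hb]; ext x
    simp only [Set.mem_diff, Finset.coe_insert, Set.mem_insert_iff, Set.mem_singleton_iff,
      Finset.mem_coe]
    constructor
    · intro hx
      exact ⟨Or.inr hx, fun he => hu (he ▸ hx)⟩
    · rintro ⟨h | h, hne⟩
      · exact absurd h hne
      · exact h
  refine ⟨husv, hsv, ?_, ?_, hbj⟩
  · ext x
    constructor
    · rintro ⟨hx, hnb⟩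
      have hxu : x ≠ u := fun he => husv (he ▸ hx)
      refine ⟨by rw [hsv]; exact Set.mem_insert_of_mem u hx, ?_⟩
      intro hmem
      rw [Finset.mem_coe, hb] at hmem
      rcases Finset.mem_insert.mp hmem with h | h
      · exact hxu h
      · exact hnb h
    · rintro ⟨hx, hnb⟩
      have hxu : x ≠ u := fun he => hnb
        (by rw [Finset.mem_coe, hb, he]; exact Finset.mem_insert_self u _)
      rw [hsv] at hx
      rcases Set.mem_insert_iff.mp hx with h | h
      · exact absurd h hxu
      · refine ⟨h, fun hB => hnb ?_⟩
        rw [Finset.mem_coe, hb]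
        exact Finset.mem_insert_of_mem hB
  · ext x
    constructor
    · rintro ⟨-, hx⟩
      by_cases hxu : x = u
      · exact Or.inl hxu
      · refine Or.inr ⟨Set.mem_univ x, ?_⟩
        rw [hsv]
        intro hmem
        rcases Set.mem_insert_iff.mp hmem with h | h
        · exact hxu h
        · exact hx h
    · intro hmem
      rcases Set.mem_insert_iff.mp hmem with rfl | ⟨-, hx⟩
      · exact ⟨Set.mem_univ _, husv⟩
      · exact ⟨Set.mem_univ x, fun h => hx (by rw [hsv]; exact Set.mem_insert_of_mem u h)⟩

lemma no_join (ht : t.IsNicePath) (C : Set V) (i : ι) (X L1 L2 : Set V) :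
    ¬ t.HasOp C i (TDOp.join X L1 L2) := by
  rintro ⟨j, k, hjk, hc, -⟩
  have hjm : j ∈ t.children i := by rw [hc]; exact Set.mem_insert j {k}
  have hkm : k ∈ t.children i := by rw [hc]; exact Set.mem_insert_of_mem j rfl
  exact hjk (child_unique ht hjm hkm)

lemma exists_op (ht : t.IsNicePath) (C : Set V) (i : ι) : ∃ τ, t.HasOp C i τ := by
  rcases ht i with ⟨hc, u, hb⟩ | ⟨j, u, hc, hu, hb⟩ | ⟨j, u, hc, hu, hb⟩
  · exact ⟨TDOp.introduce u, Or.inl ⟨hc, hb⟩⟩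
  · exact ⟨TDOp.introduce u, Or.inr ⟨j, hc, hu, hb⟩⟩
  · exact ⟨TDOp.forget u, ⟨j, hc, hu, hb⟩⟩

/-- Nodes between two nodes of equal trace have the same trace. -/
lemma trace_of_between (C : Set V) {imin imax m : ι} {L X R : Set V}
    (h1 : t.HasTrace C imin L X R) (h2 : t.HasTrace C imax L X R)
    (hm1 : t.anc m imin) (hm2 : t.anc imax m) : t.HasTrace C m L X R := by
  obtain ⟨hL1, hX1, hR1⟩ := h1
  obtain ⟨hL2, hX2, hR2⟩ := h2
  have hLm : t.Lset m ∩ C = L := by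
    apply Set.Subset.antisymm
    · rw [hL2]; exact Set.inter_subset_inter_left C (Lset_mono hm2)
    · rw [hL1]; exact Set.inter_subset_inter_left C (Lset_mono hm1)
  have hRm : t.Rset m ∩ C = R := by
    apply Set.Subset.antisymm
    · rw [hR1]; exact Set.inter_subset_inter_left C (Rset_mono hm1)
    · rw [hR2]; exact Set.inter_subset_inter_left C (Rset_mono hm2)
  refine ⟨hLm.symm, ?_, hRm.symm⟩
  rw [hX1]
  ext c
  simp only [Set.mem_inter_iff, Finset.mem_coe]
  constructor
  · rintro ⟨hb, hcC⟩
    have := mem_bag_iff_not.mp hb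
    refine ⟨?_, hcC⟩
    rw [← Finset.mem_coe, mem_bag_iff_not]
    constructor
    · intro hLc
      have : c ∈ L := hLm ▸ ⟨hLc, hcC⟩
      rw [hL1] at this
      exact (mem_bag_iff_not.mp hb).1 this.1
    · intro hRc
      have : c ∈ R := hRm ▸ ⟨hRc, hcC⟩
      rw [hR1] at this
      exact (mem_bag_iff_not.mp hb).2 this.1
  · rintro ⟨hb, hcC⟩
    refine ⟨?_, hcC⟩
    rw [← Finset.mem_coe, mem_bag_iff_not] at hb ⊢
    constructor
    · intro hLc
      have : c ∈ L := by rw [hL1]; exact ⟨hLc, hcC⟩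
      rw [← hLm] at this
      exact hb.1 this.1
    · intro hRc
      have : c ∈ R := by rw [hR1]; exact ⟨hRc, hcC⟩
      rw [← hRm] at this
      exact hb.2 this.1

end DecEq

/-- Existence of a lowest node with a given trace, when all nodes with that trace lie
weakly below `j`. -/
lemma exists_min_trace [DecidableEq V] [Fintype ι] (ht : t.IsNicePath) (C : Set V)
    {L X R : Set V} {j : ι} (hj : t.HasTrace C j L X R)
    (hup : ∀ i, t.HasTrace C i L X R → t.anc j i) :
    ∃ i0, t.HasTrace C i0 L X R ∧ t.anc j i0 ∧ ∀ i, t.HasTrace C i L X R → t.anc i i0 := by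
  classical
  set F : Finset ι := Finset.univ.filter (fun i => t.HasTrace C i L X R) with hF
  have hjF : j ∈ F := by simp [hF, hj]
  obtain ⟨i0, hi0F, hmax⟩ := F.exists_max_image t.tdepth ⟨j, hjF⟩
  have hi0 : t.HasTrace C i0 L X R := by
    have := Finset.mem_filter.mp hi0F; exact this.2
  refine ⟨i0, hi0, hup i0 hi0, ?_⟩
  intro i hi
  rcases anc_total ht i i0 with h | h
  · exact h
  · by_cases he : i0 = i
    · exact he ▸ t.anc_refl i0
    · exfalso
      have h1 : t.tdepth i0 < t.tdepth i := tdepth_lt_of_anc h he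
      have h2 : t.tdepth i ≤ t.tdepth i0 := hmax i (by simp [hF, hi])
      omega

end RootedTreeDecomp

section MainHelpers

open RootedTreeDecomp

variable {V ι : Type} [DecidableEq V] {G : SimpleGraph V} {t : RootedTreeDecomp V ι G}
variable {C : Set V}

lemma anc_parent_of_strict {k i : ι} (h : t.anc k i) (hne : k ≠ i) :
    t.anc k (t.parent i) := by
  obtain ⟨n, hn⟩ := h
  have hpos : 0 < n := by
    rcases Nat.eq_zero_or_pos n with h0 | h0
    · rw [h0] at hn; exact absurd hn.symm hne
    · exact h0
  refine ⟨n - 1, ?_⟩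
  calc t.parent^[n-1] (t.parent i) = t.parent^[(n-1)+1] i :=
        (Function.iterate_succ_apply _ _ _).symm
    _ = k := by rw [Nat.sub_add_cancel hpos]; exact hn

lemma child_eq_of_children_singleton {p j j' : ι} (hj : j ∈ t.children p)
    (hcj : t.children p = {j'}) : j = j' := by
  rw [hcj] at hj; exact hj

/-- `XTRset` is contained in the bag of any node with the given trace. -/
lemma XTR_subset_bag (ht : t.IsNicePath) {Q : TDQuint V} {m : ι}
    (hm : t.HasTrace C m Q.LC Q.XC Q.RC) :
    XTRset G C Q ⊆ ↑(t.bag m) := by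
  rintro x ⟨hxC, ⟨l, hl⟩, ⟨r, hr⟩⟩
  obtain ⟨k, hxk, hlk⟩ := t.bag_edge x l hl.1
  obtain ⟨k', hxk', hrk'⟩ := t.bag_edge x r hr.1
  have hlL : l ∈ t.Lset m := by
    have := hl.2; rw [hm.1] at this; exact this.1
  have hrR : r ∈ t.Rset m := by
    have := hr.2; rw [hm.2.2] at this; exact this.1
  have h1 := Lset_bags_below ht hlL hlk
  have h2 := Rset_bags_above ht hrR hrk'
  exact mem_bag_of_between hxk' hxk h2.1 h1.1

/-- bags of the introduced vertex at `imin` lie weakly above `imin`. -/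
lemma intro_bags_above (ht : t.IsNicePath) {imin : ι} {u : V}
    (h5 : t.HasOp C imin (TDOp.introduce u)) {k : ι} (hk : u ∈ t.bag k) :
    t.anc k imin := by
  have humin : u ∈ t.bag imin := by
    rcases h5 with ⟨hcm, hbag⟩ | ⟨j, hcj, huj, hbj⟩
    · rw [hbag]; exact Finset.mem_singleton_self u
    · rw [hbj]; exact Finset.mem_insert_self u _
  rcases anc_total ht k imin with h | h
  · exact h
  · by_cases hke : k = imin
    · exact hke ▸ t.anc_refl k
    · exfalso
      rcases h5 with ⟨hcm, hbag⟩ | ⟨j, hcj, huj, hbj⟩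
      · exact hke (desc_of_leaf hcm h)
      · have hjk : t.anc j k := anc_child hcj h hke
        exact huj (mem_bag_of_between humin hk (anc_of_child hcj) hjk)

/-- bags of the vertex forgotten at the father of `imax` lie weakly below `imax`;
also that vertex belongs to the bag of `imax`. -/
lemma forgotten_bags_below (ht : t.IsNicePath) {imax : ι} {v : V}
    (hnr : imax ≠ t.root) (hop : t.HasOp C (t.parent imax) (TDOp.forget v)) :
    v ∈ t.bag imax ∧ t.bag (t.parent imax) = (t.bag imax).erase v ∧
      ∀ k, v ∈ t.bag k → t.anc imax k := by
  obtain ⟨j, hcj, hvj, hbp⟩ := hop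
  have hji : j = imax :=
    (child_eq_of_children_singleton (mem_children_iff.mpr ⟨hnr, rfl⟩) hcj).symm
  subst hji
  refine ⟨hvj, hbp, fun k hk => ?_⟩
  rcases anc_total ht k j with h | h
  · by_cases hke : k = j
    · exact hke ▸ t.anc_refl k
    · exfalso
      have := mem_bag_of_between hk hvj (anc_parent_of_strict h hke) (t.anc_parent j)
      rw [hbp] at this
      exact Finset.notMem_erase v _ this
  · exact h

/-- The vertex forgotten at `imin` belongs to `C` (given trace extremality). -/
lemma forget_imin_mem_C (ht : t.IsNicePath) {LCs XCs RCs : Set V} {imin imax : ι} {u : V}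
    (h1 : t.HasTrace C imin LCs XCs RCs)
    (h4 : ∀ i, t.HasTrace C i LCs XCs RCs → t.anc i imin ∧ t.anc imax i)
    {j : ι} (hcj : t.children imin = {j}) (huj : u ∈ t.bag j)
    (hbj : t.bag imin = (t.bag j).erase u) :
    u ∈ C := by
  by_contra huC
  obtain ⟨hbag, hsv, hL, hR, huL⟩ := forget_step hcj huj hbj
  have htr : t.HasTrace C j LCs XCs RCs := by
    obtain ⟨e1, e2, e3⟩ := h1
    refine ⟨?_, ?_, ?_⟩
    · rw [e1, hL]; ext c
      simp only [Set.mem_inter_iff, Set.mem_diff, Set.mem_singleton_iff]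
      exact ⟨fun ⟨a, b⟩ => ⟨⟨a, fun he => huC (he ▸ b)⟩, b⟩, fun ⟨⟨a, _⟩, b⟩ => ⟨a, b⟩⟩
    · rw [e2, hbag]; ext c
      simp only [Set.mem_inter_iff, Set.mem_insert_iff, Finset.mem_coe]
      constructor
      · rintro ⟨a, b⟩; exact ⟨Or.inr a, b⟩
      · rintro ⟨a | a, b⟩
        · exact absurd (a ▸ b) huC
        · exact ⟨a, b⟩
    · rw [e3, hR]
  have hanc : t.anc j imin := (h4 j htr).1
  have : j = imin := anc_antisymm hanc (anc_of_child hcj)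
  have hroot : j = t.root := eq_root_of_parent_eq
    (by rw [(children_singleton_parent hcj).1]; exact this.symm)
  exact (children_singleton_parent hcj).2 hroot

/-- The vertex forgotten at the father of `imax` belongs to `C`. -/
lemma forget_imax_mem_C (ht : t.IsNicePath) {LCs XCs RCs : Set V} {imin imax : ι} {v : V}
    (h2 : t.HasTrace C imax LCs XCs RCs)
    (h4 : ∀ i, t.HasTrace C i LCs XCs RCs → t.anc i imin ∧ t.anc imax i)
    (hnr : imax ≠ t.root) (hop : t.HasOp C (t.parent imax) (TDOp.forget v)) :
    v ∈ C := by
  obtain ⟨j, hcj, hvj, hbp⟩ := hop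
  have hji : j = imax :=
    (child_eq_of_children_singleton (mem_children_iff.mpr ⟨hnr, rfl⟩) hcj).symm
  subst hji
  by_contra hvC
  obtain ⟨hbag, hsv, hL, hR, hvL⟩ := forget_step hcj hvj hbp
  have htr : t.HasTrace C (t.parent j) LCs XCs RCs := by
    obtain ⟨e1, e2, e3⟩ := h2
    refine ⟨?_, ?_, ?_⟩
    · rw [e1, hL]; ext c
      simp only [Set.mem_inter_iff, Set.mem_diff, Set.mem_singleton_iff]
      exact ⟨fun ⟨a, b⟩ => ⟨a.1, b⟩, fun ⟨a, b⟩ => ⟨⟨a, fun he => hvC (he ▸ b)⟩, b⟩⟩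
    · rw [e2, hbag]; ext c
      simp only [Set.mem_inter_iff, Set.mem_insert_iff, Finset.mem_coe]
      constructor
      · rintro ⟨a | a, b⟩
        · exact absurd (a ▸ b) hvC
        · exact ⟨a, b⟩
      · rintro ⟨a, b⟩; exact ⟨Or.inr a, b⟩
    · rw [e3, hR]
  have hanc : t.anc j (t.parent j) := (h4 _ htr).2
  have : t.parent j = j := anc_antisymm (t.anc_parent j) hanc
  exact hnr (eq_root_of_parent_eq this)

/-- The vertex introduced at the father of `imax` belongs to `C`. -/
lemma intro_imax_mem_C (ht : t.IsNicePath) {LCs XCs RCs : Set V} {imin imax : ι} {v : V}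
    (h2 : t.HasTrace C imax LCs XCs RCs)
    (h4 : ∀ i, t.HasTrace C i LCs XCs RCs → t.anc i imin ∧ t.anc imax i)
    (hnr : imax ≠ t.root) (hop : t.HasOp C (t.parent imax) (TDOp.introduce v)) :
    v ∈ C ∧ v ∉ t.bag imax ∧ t.bag (t.parent imax) = insert v (t.bag imax) := by
  rcases hop with ⟨hcm, hbag⟩ | ⟨j, hcj, hvj, hbp⟩
  · exfalso
    have : imax ∈ t.children (t.parent imax) := mem_children_iff.mpr ⟨hnr, rfl⟩
    rw [hcm] at this
    exact Set.notMem_empty imax this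
  · have hji : j = imax :=
      (child_eq_of_children_singleton (mem_children_iff.mpr ⟨hnr, rfl⟩) hcj).symm
    subst hji
    refine ⟨?_, hvj, hbp⟩
    by_contra hvC
    obtain ⟨hsvj, hsv, hL, hR, hbagj⟩ := introduce_step hcj hvj hbp
    have htr : t.HasTrace C (t.parent j) LCs XCs RCs := by
      obtain ⟨e1, e2, e3⟩ := h2
      refine ⟨?_, ?_, ?_⟩
      · rw [e1, hL]
      · rw [e2, hbagj]; ext c
        simp only [Set.mem_inter_iff, Set.mem_diff, Set.mem_singleton_iff, Finset.mem_coe]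
        exact ⟨fun ⟨⟨a, _⟩, b⟩ => ⟨a, b⟩, fun ⟨a, b⟩ => ⟨⟨a, fun he => hvC (he ▸ b)⟩, b⟩⟩
      · rw [e3, hR]; ext c
        simp only [Set.mem_inter_iff, Set.mem_insert_iff]
        constructor
        · rintro ⟨a | a, b⟩
          · exact absurd (a ▸ b) hvC
          · exact ⟨a, b⟩
        · rintro ⟨a, b⟩; exact ⟨Or.inr a, b⟩
    have hanc : t.anc j (t.parent j) := (h4 _ htr).2
    have : t.parent j = j := anc_antisymm (t.anc_parent j) hanc
    exact hnr (eq_root_of_parent_eq this)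

/-- counting three pairwise disjoint subsets of a bag. -/
lemma card3 [Fintype V] {A B D : Set V} {F : Finset V} (hA : A ⊆ ↑F) (hB : B ⊆ ↑F)
    (hD : D ⊆ ↑F) (hAB : Disjoint A B) (hAD : Disjoint A D) (hBD : Disjoint B D) :
    A.ncard + B.ncard + D.ncard ≤ F.card := by
  have h1 : (A ∪ B ∪ D).ncard = A.ncard + B.ncard + D.ncard := by
    rw [Set.ncard_union_eq (Set.disjoint_union_left.mpr ⟨hAD, hBD⟩) (Set.toFinite _)
      (Set.toFinite _), Set.ncard_union_eq hAB (Set.toFinite _) (Set.toFinite _)]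
  rw [← h1, ← Set.ncard_coe_finset F]
  exact Set.ncard_le_ncard (by
    apply Set.union_subset (Set.union_subset hA hB) hD) (Set.toFinite _)

end MainHelpers

section MainLemma

open RootedTreeDecomp

variable {V ι : Type} [DecidableEq V] {G : SimpleGraph V}
variable {t : RootedTreeDecomp V ι G} {C : Set V}

lemma intro_mem_bag {imin : ι} {u : V} (h5 : t.HasOp C imin (TDOp.introduce u)) :
    u ∈ t.bag imin := by
  rcases h5 with ⟨hcm, hbag⟩ | ⟨j, hcj, huj, hbj⟩
  · rw [hbag]; exact Finset.mem_singleton_self u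
  · rw [hbj]; exact Finset.mem_insert_self u _

lemma final_comb {a b xl xr e S : ℕ} (h1 : a + b + xl ≤ S) (h2 : a + b + xr ≤ S)
    (h3 : a + b + e ≤ S) : a + b + max (max xl xr) e - 1 ≤ S - 1 := by
  have : a + b + max (max xl xr) e ≤ S := by
    rcases max_cases (max xl xr) e with ⟨hEq, -⟩ | ⟨hEq, -⟩
    · rw [hEq]
      rcases max_cases xl xr with ⟨hq, -⟩ | ⟨hq, -⟩ <;> rw [hq] <;> assumption
    · rw [hEq]; exact h3
  omega

lemma locpw_le_width [Fintype V] [Fintype ι] (ht : t.IsNicePath) {Q : TDQuint V}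
    {imin imax : ι} (h : RespectsAtND t C Q imin imax) : locpw G C Q ≤ t.width := by
  obtain ⟨τL, LC, XC, RC, τR⟩ := Q
  obtain ⟨h1, h2, h3, h4, h5, h6⟩ := h
  dsimp only at h1 h2 h4 h5 h6
  set S := Finset.univ.sup (fun i => (t.bag i).card) with hS
  have hbagS : ∀ i : ι, (t.bag i).card ≤ S := by
    intro i; rw [hS]; exact Finset.le_sup (f := fun i => (t.bag i).card) (Finset.mem_univ i)
  have hXCsub : ∀ {m : ι}, t.HasTrace C m LC XC RC → XC ⊆ ↑(t.bag m) := by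
    intro m hm x hx; rw [hm.2.1] at hx; exact hx.1
  have hXCC : XC ⊆ C := by intro x hx; rw [h1.2.1] at hx; exact hx.2
  have hLC_XC : ∀ a, a ∈ LC → a ∈ XC → False := by
    intro a haL haX
    rw [h1.1] at haL; rw [h1.2.1] at haX
    exact Set.eq_empty_iff_forall_notMem.mp (Lset_disj_bag imin) a ⟨haL.1, haX.1⟩
  have hXC_RC : ∀ a, a ∈ XC → a ∈ RC → False := by
    intro a haX haR
    rw [h1.2.1] at haX; rw [h1.2.2] at haR
    exact Set.eq_empty_iff_forall_notMem.mp (Rset_disj_bag imin) a ⟨haR.1, haX.1⟩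
  have hLC_RC : ∀ a, a ∈ LC → a ∈ RC → False := by
    intro a haL haR
    rw [h1.1] at haL; rw [h1.2.2] at haR
    exact Set.eq_empty_iff_forall_notMem.mp (Lset_disj_Rset imin) a ⟨haL.1, haR.1⟩
  have hdisjXT : Disjoint XC (XTRset G C ⟨τL, LC, XC, RC, τR⟩) :=
    Set.disjoint_left.mpr (fun a ha hb => hb.1 (hXCC ha))
  have key : ∀ (m : ι) (D : Set V), t.HasTrace C m LC XC RC → D ⊆ ↑(t.bag m) →
      Disjoint XC D → Disjoint (XTRset G C ⟨τL, LC, XC, RC, τR⟩) D →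
      XC.ncard + (XTRset G C ⟨τL, LC, XC, RC, τR⟩).ncard + D.ncard ≤ S := by
    intro m D hm hD hd1 hd2
    exact le_trans (card3 (hXCsub hm) (XTR_subset_bag ht hm) hD hdisjXT hd1 hd2) (hbagS m)
  have hbase : XC.ncard + (XTRset G C ⟨τL, LC, XC, RC, τR⟩).ncard + (0 : ℕ) ≤ S := by
    have := key imin ∅ h1 (by simp) (Set.disjoint_empty XC) (Set.disjoint_empty _)
    simpa using this
  -- packaging of the ε-witness into the required bound
  have pack : ∀ (m : ι) (z : V), XC ⊆ ↑(t.bag m) →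
      XTRset G C ⟨τL, LC, XC, RC, τR⟩ ⊆ ↑(t.bag m) → z ∈ t.bag m → z ∉ XC →
      z ∉ XTRset G C ⟨τL, LC, XC, RC, τR⟩ →
      XC.ncard + (XTRset G C ⟨τL, LC, XC, RC, τR⟩).ncard + 1 ≤ S := by
    intro m z hXCm hXTm hzm hzX hzT
    have hcard := card3 hXCm hXTm
      (show ({z} : Set V) ⊆ ↑(t.bag m) by simp [hzm]) hdisjXT
      (Set.disjoint_singleton_right.mpr hzX) (Set.disjoint_singleton_right.mpr hzT)
    rw [Set.ncard_singleton] at hcard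
    exact le_trans hcard (hbagS m)
  -- XR bound (independent of τL)
  have hXRb : XC.ncard + (XTRset G C ⟨τL, LC, XC, RC, τR⟩).ncard +
      (XRset G C ⟨τL, LC, XC, RC, τR⟩).ncard ≤ S := by
    rcases hτ2 : τR with v | v | ⟨Y, M1, M2⟩
    · subst hτ2
      have hXRe : XRset G C ⟨τL, LC, XC, RC, TDOp.introduce v⟩ = ∅ := rfl
      rw [hXRe]; simpa using hbase
    · -- τR = forget v
      subst hτ2
      rcases h6 with ⟨hroot, w, hwbag, hτ⟩ | ⟨hnr, hop⟩
      · have hRCempty : RC = ∅ := by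
          rw [h2.2.2, hroot, Rset_root, Set.empty_inter]
        have hXRe : XRset G C ⟨τL, LC, XC, RC, TDOp.forget v⟩ = ∅ := by
          apply Set.eq_empty_iff_forall_notMem.mpr
          rintro x ⟨-, -, -, r, hr⟩
          rw [hRCempty] at hr
          exact absurd hr.2 (Set.notMem_empty r)
        rw [hXRe]; simpa using hbase
      · obtain ⟨hvbag, hbp, hbelow⟩ := forgotten_bags_below ht hnr hop
        refine key imax _ h2 ?_ ?_ ?_
        · rintro x ⟨hxC, hsub, hv, r, hr⟩
          obtain ⟨k', hxk', hrk'⟩ := t.bag_edge x r hr.1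
          have hrR : r ∈ t.Rset imax := by
            have := hr.2; rw [h2.2.2] at this; exact this.1
          obtain ⟨k, hxk, hvk⟩ := t.bag_edge x v hv
          exact mem_bag_of_between hxk' hxk (Rset_bags_above ht hrR hrk').1 (hbelow k hvk)
        · exact Set.disjoint_left.mpr (fun a ha hb => hb.1 (hXCC ha))
        · refine Set.disjoint_left.mpr ?_
          rintro a ⟨haC, ⟨l, hl⟩, -⟩ ⟨-, hsub, -⟩
          rcases hsub hl.1 with hR | hX
          · exact hLC_RC l hl.2 hR
          · exact hLC_XC l hl.2 hX
    · subst hτ2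
      have hXRe : XRset G C ⟨τL, LC, XC, RC, TDOp.join Y M1 M2⟩ = ∅ := rfl
      rw [hXRe]; simpa using hbase
  rcases τL with u | u | ⟨Y, L1, L2⟩
  · -- τL = introduce u
    have humin : u ∈ t.bag imin := intro_mem_bag h5
    have hXLb : XC.ncard + (XTRset G C ⟨TDOp.introduce u, LC, XC, RC, τR⟩).ncard +
        (XLset G C ⟨TDOp.introduce u, LC, XC, RC, τR⟩).ncard ≤ S := by
      refine key imin _ h1 ?_ ?_ ?_
      · rintro x ⟨hxC, hsub, hu, l, hl⟩
        obtain ⟨k, hxk, hlk⟩ := t.bag_edge x l hl.1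
        have hlL : l ∈ t.Lset imin := by
          have := hl.2; rw [h1.1] at this; exact this.1
        obtain ⟨k', hxk', huk'⟩ := t.bag_edge x u hu
        exact mem_bag_of_between hxk' hxk (intro_bags_above ht h5 huk')
          (Lset_bags_below ht hlL hlk).1
      · exact Set.disjoint_left.mpr (fun a ha hb => hb.1 (hXCC ha))
      · refine Set.disjoint_left.mpr ?_
        rintro a ⟨haC, -, r, hr⟩ ⟨-, hsub, -⟩
        rcases hsub hr.1 with hL | hX
        · exact hLC_RC r hL hr.2
        · exact hXC_RC r hX hr.2
    have hEpsb : XC.ncard + (XTRset G C ⟨TDOp.introduce u, LC, XC, RC, τR⟩).ncard +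
        (epsP G C ⟨TDOp.introduce u, LC, XC, RC, τR⟩) ≤ S := by
      unfold epsP
      split_ifs with hne
      · by_cases huC : u ∈ C
        · -- u ∈ C : use the XF witness
          obtain ⟨x, hxC, hNsub, hmi, hpl⟩ := hne
          have huXC : u ∈ XC := by rw [h1.2.1]; exact ⟨humin, huC⟩
          have hssu : XC \ {u} ⊂ XC := by
            constructor
            · exact Set.diff_subset
            · intro hsub'
              exact absurd (hsub' huXC).2 (by simp)
          have huN : u ∈ G.neighborSet x := by
            by_contra hun
            exact hmi hssu (fun y hy => ⟨hNsub hy, fun he => hun (he ▸ hy)⟩)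
          have hxnT : x ∉ XTRset G C ⟨TDOp.introduce u, LC, XC, RC, τR⟩ := by
            rintro ⟨-, ⟨l, hl⟩, -⟩
            exact hLC_XC l hl.2 (hNsub hl.1)
          -- the common end-game given a right-side neighbour
          have F3tail : ∀ v, v ∈ G.neighborSet x → (∀ k, v ∈ t.bag k → t.anc imax k) →
              XC.ncard + (XTRset G C ⟨TDOp.introduce u, LC, XC, RC, τR⟩).ncard + 1 ≤ S := by
            intro v hvN hbelow
            obtain ⟨k, hxk, huk⟩ := t.bag_edge x u huN
            obtain ⟨k', hxk', hvk'⟩ := t.bag_edge x v hvN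
            have h7 : t.anc k imin := intro_bags_above ht h5 huk
            have h8 : t.anc imax k' := hbelow k' hvk'
            rcases anc_total ht k imax with hka | hka
            · exact pack imax x (hXCsub h2) (XTR_subset_bag ht h2)
                (mem_bag_of_between hxk hxk' hka h8) (fun hxX => hxC (hXCC hxX)) hxnT
            · have htr := trace_of_between C h1 h2 h7 hka
              exact pack k x (hXCsub htr) (XTR_subset_bag ht htr) hxk
                (fun hxX => hxC (hXCC hxX)) hxnT
          rcases h6 with ⟨hroot, w, hwbag, hτ⟩ | ⟨hnr, hop⟩
          · -- imax is the root with bag {w}; then u = w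
            have huw : u = w := by
              have hub : u ∈ t.bag imax := hXCsub h2 huXC
              rw [hroot, hwbag] at hub
              exact Finset.mem_singleton.mp hub
            exact F3tail u huN (fun k _ => hroot ▸ anc_root k)
          · rcases hτ2 : τR with v | v | ⟨Y, M1, M2⟩
            · -- τR = introduce v : use the bag of the father of imax
              subst hτ2
              obtain ⟨hvC, hvnb, hbp⟩ := intro_imax_mem_C ht h2 h4 hnr hop
              refine pack (t.parent imax) v ?_ ?_ ?_ ?_ ?_
              · intro a ha
                have hai : a ∈ t.bag imax := hXCsub h2 ha
                rw [Finset.mem_coe, hbp]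
                exact Finset.mem_insert_of_mem hai
              · rintro a ⟨haC, ⟨l, hl⟩, ⟨r, hr⟩⟩
                obtain ⟨k, hak, hlk⟩ := t.bag_edge a l hl.1
                obtain ⟨k', hak', hrk'⟩ := t.bag_edge a r hr.1
                have hlL : l ∈ t.Lset imin := by
                  have := hl.2; rw [h1.1] at this; exact this.1
                have hrR : r ∈ t.Rset imax := by
                  have := hr.2; rw [h2.2.2] at this; exact this.1
                have hb1 := Lset_bags_below ht hlL hlk
                have hb2 := Rset_bags_above ht hrR hrk'
                exact mem_bag_of_between hak' hak
                  (anc_parent_of_strict hb2.1 hb2.2)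
                  (anc_trans (anc_trans (t.anc_parent imax) h3) hb1.1)
              · rw [hbp]; exact Finset.mem_insert_self v _
              · exact fun hv => hvnb (hXCsub h2 hv)
              · exact fun hv => hv.1 hvC
            · -- τR = forget v
              subst hτ2
              have hvC := forget_imax_mem_C ht h2 h4 hnr hop
              obtain ⟨hvbag, hbp2, hbelow⟩ := forgotten_bags_below ht hnr hop
              have hvXC : v ∈ XC := by rw [h2.2.1]; exact ⟨hvbag, hvC⟩
              have hssv : XC \ {v} ⊂ XC := by
                constructor
                · exact Set.diff_subset
                · intro hsub'
                  exact absurd (hsub' hvXC).2 (by simp)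
              have hvN : v ∈ G.neighborSet x := by
                by_contra hvn
                exact hpl hssv (fun y hy => ⟨hNsub hy, fun he => hvn (he ▸ hy)⟩)
              exact F3tail v hvN hbelow
            · subst hτ2
              exact absurd hop (no_join ht C _ _ _ _)
        · -- u ∉ C : u itself is an extra element of the bag of imin
          refine pack imin u (hXCsub h1) (XTR_subset_bag ht h1) humin
            (fun hu => huC (hXCC hu)) ?_
          rintro ⟨-, ⟨l, hl⟩, -⟩
          obtain ⟨k0, hu0, hl0⟩ := t.bag_edge u l hl.1
          have hlL : l ∈ t.Lset imin := by
            have := hl.2; rw [h1.1] at this; exact this.1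
          have hb := Lset_bags_below ht hlL hl0
          exact hb.2 (anc_antisymm (intro_bags_above ht h5 hu0) hb.1)
      · simpa using hbase
    exact final_comb hXLb hXRb hEpsb
  · -- τL = forget u
    obtain ⟨j, hcj, huj, hbj⟩ := h5
    have hXLb : XC.ncard + (XTRset G C ⟨TDOp.forget u, LC, XC, RC, τR⟩).ncard +
        (XLset G C ⟨TDOp.forget u, LC, XC, RC, τR⟩).ncard ≤ S := by
      have hXLe : XLset G C ⟨TDOp.forget u, LC, XC, RC, τR⟩ = ∅ := rfl
      rw [hXLe]; simpa using hbase
    have hEpsb : XC.ncard + (XTRset G C ⟨TDOp.forget u, LC, XC, RC, τR⟩).ncard +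
        (epsP G C ⟨TDOp.forget u, LC, XC, RC, τR⟩) ≤ S := by
      unfold epsP
      split_ifs with hne
      · obtain ⟨hbagj, hsvj, hLj, hRj, huL⟩ := forget_step hcj huj hbj
        refine pack j u ?_ ?_ huj ?_ ?_
        · intro a ha
          have := hXCsub h1 ha
          rw [hbagj]
          exact Set.mem_insert_of_mem u this
        · rintro a ⟨haC, ⟨l, hl⟩, ⟨r, hr⟩⟩
          obtain ⟨k, hak, hlk⟩ := t.bag_edge a l hl.1
          obtain ⟨k', hak', hrk'⟩ := t.bag_edge a r hr.1
          have hlL : l ∈ t.Lset imin := by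
            have := hl.2; rw [h1.1] at this; exact this.1
          have hrR : r ∈ t.Rset imin := by
            have := hr.2; rw [h1.2.2] at this; exact this.1
          have hb1 := Lset_bags_below ht hlL hlk
          have hb2 := Rset_bags_above ht hrR hrk'
          exact mem_bag_of_between hak' hak (anc_trans hb2.1 (anc_of_child hcj))
            (anc_child hcj hb1.1 hb1.2)
        · intro hu
          have := hXCsub h1 hu
          rw [Finset.mem_coe, hbj] at this
          exact Finset.notMem_erase u _ this
        · rintro ⟨-, -, r, hr⟩
          obtain ⟨k0, hu0, hr0⟩ := t.bag_edge u r hr.1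
          have hrR : r ∈ t.Rset imin := by
            have := hr.2; rw [h1.2.2] at this; exact this.1
          have hb1 := Lset_bags_below ht huL hu0
          have hb2 := Rset_bags_above ht hrR hr0
          exact hb1.2 (anc_antisymm hb2.1 hb1.1)
      · simpa using hbase
    exact final_comb hXLb hXRb hEpsb
  · exact absurd h5 (no_join ht C imin Y L1 L2)

end MainLemma

section Recursion

open RootedTreeDecomp

variable {V ι : Type} [DecidableEq V] {G : SimpleGraph V}
variable {t : RootedTreeDecomp V ι G} {C : Set V}

lemma ppwAux_le_width [Fintype V] [Fintype ι] (ht : t.IsNicePath) (m : ℕ) :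
    ∀ (Q : TDQuint V) (imin imax : ι), RespectsAtND t C Q imin imax →
      ppwAux G C m Q ≤ t.width := by
  induction m with
  | zero =>
    intro Q imin imax h
    exact locpw_le_width ht h
  | succ m IH =>
    intro Q imin imax h
    have hloc := locpw_le_width ht h
    obtain ⟨τL, LC, XC, RC, τR⟩ := Q
    obtain ⟨h1, h2, h3, h4, h5, h6⟩ := h
    dsimp only at h1 h2 h4 h5 h6
    have hresp : RespectsAtND t C ⟨τL, LC, XC, RC, τR⟩ imin imax :=
      ⟨h1, h2, h3, h4, h5, h6⟩
    simp only [ppwAux]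
    split_ifs with hguard
    · exact hloc
    · rcases τL with u | u | ⟨Y, L1, L2⟩
      · -- τL = introduce u
        refine max_le hloc ?_
        by_cases huC : u ∈ C
        · -- u ∈ C : descend to the child of imin
          rcases h5 with ⟨hcm, hbag⟩ | ⟨j, hcj, huj, hbj⟩
          · -- leaf : then the guard would have been true
            exfalso
            apply hguard
            refine ⟨u, rfl, ?_, ?_, ?_⟩
            · rw [h1.1, leaf_Lset hcm, Set.empty_inter]
            · rw [h1.2.1, hbag]
              ext c
              simp only [Set.mem_inter_iff, Finset.coe_singleton, Set.mem_singleton_iff]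
              exact ⟨fun ⟨a, _⟩ => a, fun a => ⟨a, a ▸ huC⟩⟩
            · rw [h1.2.2, RootedTreeDecomp.Rset, leaf_subVerts hcm, hbag]
              ext c
              simp only [Set.mem_inter_iff, Set.mem_diff, Set.mem_univ, true_and,
                Finset.coe_singleton, Set.mem_singleton_iff]
              tauto
          · -- child j
            obtain ⟨husv, hsv, hLj, hRj, hbagj⟩ := introduce_step hcj huj hbj
            have hpj : t.parent j = imin := (children_singleton_parent hcj).1
            have htrj : t.HasTrace C j LC (XC \ {u}) (RC ∪ {u}) := by
              refine ⟨?_, ?_, ?_⟩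
              · rw [h1.1, hLj]
              · rw [h1.2.1, hbagj]
                ext c
                simp only [Set.mem_diff, Set.mem_inter_iff, Set.mem_singleton_iff]
                tauto
              · rw [h1.2.2, hRj]
                ext c
                simp only [Set.mem_union, Set.mem_inter_iff, Set.mem_insert_iff,
                  Set.mem_singleton_iff]
                constructor
                · rintro (⟨a, b⟩ | a)
                  · exact ⟨Or.inr a, b⟩
                  · exact ⟨Or.inl a, a ▸ huC⟩
                · rintro ⟨a | a, b⟩
                  · exact Or.inr a
                  · exact Or.inl ⟨a, b⟩
            have hup : ∀ i, t.HasTrace C i LC (XC \ {u}) (RC ∪ {u}) → t.anc j i := by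
              intro i hi
              rcases anc_total ht i j with hij | hji
              · by_cases hie : i = j
                · exact hie ▸ t.anc_refl i
                · exfalso
                  have himin : t.anc i imin := by
                    have := anc_parent_of_strict hij hie
                    rwa [hpj] at this
                  have huRi : u ∈ t.Rset i ∩ C := by
                    rw [← hi.2.2]
                    exact Set.mem_union_right _ rfl
                  have : u ∈ t.Rset imin := Rset_mono himin huRi.1
                  exact this.2 (bag_subset_subVerts imin (intro_mem_bag (C := C) (Or.inr ⟨j, hcj, huj, hbj⟩)))
              · exact hji
            obtain ⟨i0, hi0tr, hanci0, hmin⟩ := exists_min_trace ht C htrj hup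
            obtain ⟨τ0, hτ0⟩ := exists_op ht C i0
            have hrespQm : RespectsAtND t C
                ⟨τ0, LC, XC \ {u}, RC ∪ {u}, TDOp.introduce u⟩ i0 j := by
              refine ⟨hi0tr, htrj, hanci0, fun i hi => ⟨hmin i hi, hup i hi⟩, hτ0,
                Or.inr ⟨(children_singleton_parent hcj).2, ?_⟩⟩
              rw [hpj]
              exact Or.inr ⟨j, hcj, huj, hbj⟩
            have hmem : ppwAux G C m ⟨τ0, LC, XC \ {u}, RC ∪ {u}, TDOp.introduce u⟩ ∈
                {n | ∃ τ, ValidQuintP G C ⟨τ, LC, XC \ {u}, RC ∪ {u}, TDOp.introduce u⟩ ∧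
                  n = ppwAux G C m ⟨τ, LC, XC \ {u}, RC ∪ {u}, TDOp.introduce u⟩} :=
              ⟨τ0, ⟨ι, t, ht, i0, j, hrespQm⟩, rfl⟩
            exact le_trans (Nat.sInf_le hmem) (IH _ _ _ hrespQm)
        · -- u ∉ C : the recursion set is empty
          have hempty : {n : ℕ | ∃ τ,
              ValidQuintP G C ⟨τ, LC, XC \ {u}, RC ∪ {u}, TDOp.introduce u⟩ ∧
              n = ppwAux G C m ⟨τ, LC, XC \ {u}, RC ∪ {u}, TDOp.introduce u⟩} = ∅ := by
            apply Set.eq_empty_iff_forall_notMem.mpr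
            rintro n ⟨τ, ⟨ι', t', ht', i1, i2, hr⟩, -⟩
            have hRtr := hr.1.2.2
            dsimp only at hRtr
            have hu : u ∈ t'.Rset i1 ∩ C := by
              rw [← hRtr]; exact Set.mem_union_right _ rfl
            exact huC hu.2
          rw [hempty, Nat.sInf_empty]
          exact Nat.zero_le _
      · -- τL = forget u
        refine max_le hloc ?_
        obtain ⟨j, hcj, huj, hbj⟩ := h5
        have huC : u ∈ C := forget_imin_mem_C ht h1 h4 hcj huj hbj
        obtain ⟨hbagj, hsvj, hLj, hRj, huL⟩ := forget_step hcj huj hbj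
        have hpj : t.parent j = imin := (children_singleton_parent hcj).1
        have htrj : t.HasTrace C j (LC \ {u}) (XC ∪ {u}) RC := by
          refine ⟨?_, ?_, ?_⟩
          · rw [h1.1, hLj]
            ext c
            simp only [Set.mem_diff, Set.mem_inter_iff, Set.mem_singleton_iff]
            tauto
          · rw [h1.2.1, hbagj]
            ext c
            simp only [Set.mem_union, Set.mem_inter_iff, Set.mem_insert_iff,
              Set.mem_singleton_iff, Finset.mem_coe]
            constructor
            · rintro (⟨a, b⟩ | a)
              · exact ⟨Or.inr a, b⟩
              · exact ⟨Or.inl a, a ▸ huC⟩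
            · rintro ⟨a | a, b⟩
              · exact Or.inr a
              · exact Or.inl ⟨a, b⟩
          · rw [h1.2.2, hRj]
        have hup : ∀ i, t.HasTrace C i (LC \ {u}) (XC ∪ {u}) RC → t.anc j i := by
          intro i hi
          rcases anc_total ht i j with hij | hji
          · by_cases hie : i = j
            · exact hie ▸ t.anc_refl i
            · exfalso
              have himin : t.anc i imin := by
                have := anc_parent_of_strict hij hie
                rwa [hpj] at this
              have huLC : u ∈ LC := by rw [h1.1]; exact ⟨huL, huC⟩
              have huLi : u ∈ t.Lset i ∩ C := by
                rw [h1.1] at huLC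
                exact ⟨Lset_mono himin huLC.1, huC⟩
              rw [← hi.1] at huLi
              exact huLi.2 rfl
          · exact hji
        obtain ⟨i0, hi0tr, hanci0, hmin⟩ := exists_min_trace ht C htrj hup
        obtain ⟨τ0, hτ0⟩ := exists_op ht C i0
        have hrespQm : RespectsAtND t C
            ⟨τ0, LC \ {u}, XC ∪ {u}, RC, TDOp.forget u⟩ i0 j := by
          refine ⟨hi0tr, htrj, hanci0, fun i hi => ⟨hmin i hi, hup i hi⟩, hτ0,
            Or.inr ⟨(children_singleton_parent hcj).2, ?_⟩⟩
          rw [hpj]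
          exact ⟨j, hcj, huj, hbj⟩
        have hmem : ppwAux G C m ⟨τ0, LC \ {u}, XC ∪ {u}, RC, TDOp.forget u⟩ ∈
            {n | ∃ τ, ValidQuintP G C ⟨τ, LC \ {u}, XC ∪ {u}, RC, TDOp.forget u⟩ ∧
              n = ppwAux G C m ⟨τ, LC \ {u}, XC ∪ {u}, RC, TDOp.forget u⟩} :=
          ⟨τ0, ⟨ι, t, ht, i0, j, hrespQm⟩, rfl⟩
        exact le_trans (Nat.sInf_le hmem) (IH _ _ _ hrespQm)
      · exact hloc

end Recursion

theorem width_ge_ppw {V ι : Type} [Fintype V] [DecidableEq V] [Fintype ι]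
    (G : SimpleGraph V) (C : Set V) (hC : IsVertexCover G C)
    (Q : TDQuint V) (hQ : ValidQuintP G C Q)
    (t : RootedTreeDecomp V ι G) (ht : t.IsNicePath)
    (hresp : ∃ imin imax, RespectsAtND t C Q imin imax) :
    ppw G C Q ≤ t.width := by
  obtain ⟨imin, imax, hr⟩ := hresp
  exact ppwAux_le_width ht _ Q imin imax hr
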